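/- Let H be a Hopf algebra over a field k with antipode S, let δ : H → k be a character (a unital k-algebra homomorphism), and let σ ∈ H be a group-like element (Δ(σ) = σ ⊗ σ and ε(σ) = 1; σ is then invertible with σ^{-1} = S(σ)). Let {}^σk_δ denote the one-dimensional vector space k equipped with the right H-action v·h := δ(h)v and the left H-coaction v ↦ σ ⊗ v. Then (δ, σ) is a modular pair in involution, i.e. δ(σ) = 1 and S_δ² = Ad_σ where S_δ(h) = δ(h₍₁₎)S(h₍₂₎) and Ad_σ(h) = σ h σ^{-1}, if and only if {}^σk_δ is a stable anti-Yetter–Drinfeld module over H, i.e. δ(σ) = 1 and δ(h₍₂₎)•S(h₍₃₎) σ h₍₁₎ = δ(h)•σ for all h ∈ H. -/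

import Mathlib

/-!
Write `S_δ(h) = δ(h₁) S(h₂)`. It is an anti-algebra map with `S_δ(h₁) h₂ = δ(h) 1` and
`S_δ(S(h₂)) S_δ(h₁) = S_δ(h₁ S(h₂)) = ε(h) 1`. Since `δ(h₂) S(h₃) = S_δ(h₂)`, the
anti-Yetter–Drinfeld condition reads `S_δ(h₂) σ h₁ = δ(h) σ`, and because `S(σ) = σ⁻¹` the
involution condition reads `σ x = S_δ²(x) σ`. The latter gives
`S_δ(h₂) σ h₁ = S_δ(S_δ(h₁) h₂) σ = δ(h) σ`; conversely the former gives
`σ h = S_δ(S(h₃)) S_δ(h₂) σ h₁ = δ(h₁) S_δ(S(h₂)) σ = S_δ²(h) σ`.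
-/
open TensorProduct

section Setup

variable (k : Type*) [Field k] (H : Type*) [Ring H] [HopfAlgebra k H]

/-- The iterated comultiplication `h ↦ h₍₁₎ ⊗ (h₍₂₎ ⊗ h₍₃₎)`. -/
noncomputable def Delta2 : H →ₗ[k] H ⊗[k] (H ⊗[k] H) :=
  (LinearMap.lTensor H (Coalgebra.comul (R := k))) ∘ₗ (Coalgebra.comul (R := k))

/-- The antipode of `H`. -/
noncomputable def antS : H →ₗ[k] H := HopfAlgebra.antipode (R := k)

/-- The twisted antipode `S_δ(h) = δ(h₍₁₎) S(h₍₂₎)` associated to a character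
`δ : H → k`. -/
noncomputable def twistedS (δ : H →ₐ[k] k) : H →ₗ[k] H :=
  (TensorProduct.lid k H).toLinearMap ∘ₗ
    (TensorProduct.map δ.toLinearMap (antS k H)) ∘ₗ (Coalgebra.comul (R := k))

end Setup

open Coalgebra HopfAlgebra

namespace TensorProduct

variable {R M N P : Type*} [CommSemiring R] [AddCommMonoid M] [Module R M]
  [AddCommMonoid N] [Module R N] [AddCommMonoid P] [Module R P]

lemma exists_sum_tmul_tmul_eq (x : M ⊗[R] (N ⊗[R] P)) :
    ∃ (n : ℕ) (a : Fin n → M) (b : Fin n → N) (c : Fin n → P),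
      x = ∑ i, a i ⊗ₜ (b i ⊗ₜ c i) := by
  induction x with
  | zero => exact ⟨0, finZeroElim, finZeroElim, finZeroElim, by simp⟩
  | tmul m y =>
    obtain ⟨n, b, c, rfl⟩ := exists_sum_tmul_eq y
    exact ⟨n, fun _ ↦ m, b, c, by rw [tmul_sum]⟩
  | add x y hx hy =>
    obtain ⟨nx, ax, bx, cx, rfl⟩ := hx
    obtain ⟨ny, ay, by', cy, rfl⟩ := hy
    exact ⟨nx + ny, Fin.addCases ax ay, Fin.addCases bx by', Fin.addCases cx cy,
      by simp [Fin.sum_univ_add]⟩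

end TensorProduct

namespace Coalgebra

variable {R A ι : Type*} [CommSemiring R] [AddCommMonoid A] [Module R A] [Coalgebra R A] {a : A}

lemma sum_counit_right_smul (𝓡 : Repr R a ι) :
    ∑ i ∈ 𝓡.index, counit (R := R) (𝓡.right i) • 𝓡.left i = a := by
  simpa only [map_sum, _root_.TensorProduct.rid_tmul, one_smul] using
    congrArg (_root_.TensorProduct.rid R A) (sum_tmul_counit_eq (R := R) 𝓡)

end Coalgebra

namespace ModularPair

variable {k : Type*} [Field k] {H : Type*} [Ring H] [HopfAlgebra k H]

lemma antS_eq_antipode : antS k H = antipode k := rfl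

lemma delta2_eq_sum_right {ι κ : Type*} {h : H} (r : Repr k h ι)
    (s : ∀ i, Repr k (r.right i) κ) :
    Delta2 k H h = ∑ i ∈ r.index, ∑ j ∈ (s i).index,
      r.left i ⊗ₜ[k] ((s i).left j ⊗ₜ[k] (s i).right j) := by
  simp only [Delta2, LinearMap.coe_comp, Function.comp_apply, ← r.eq, map_sum,
    LinearMap.lTensor_tmul, ← (s _).eq, TensorProduct.tmul_sum]

lemma delta2_eq_sum_left {ι κ : Type*} {h : H} (r : Repr k h ι)
    (u : ∀ i, Repr k (r.left i) κ) :
    Delta2 k H h = ∑ i ∈ r.index, ∑ j ∈ (u i).index,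
      (u i).left j ⊗ₜ[k] ((u i).right j ⊗ₜ[k] r.right i) := by
  rw [sum_tmul_tmul_eq r u (fun i ↦ ℛ k (r.right i)), ← delta2_eq_sum_right]

variable (δ : H →ₐ[k] k)

lemma twistedS_eq_sum {ι : Type*} {h : H} (r : Repr k h ι) :
    twistedS k H δ h = ∑ i ∈ r.index, δ (r.left i) • antS k H (r.right i) := by
  simp [twistedS, ← r.eq]

lemma twistedS_one : twistedS k H δ 1 = 1 := by
  simp [twistedS, Algebra.TensorProduct.one_def, antS_eq_antipode]

lemma twistedS_mul (a b : H) :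
    twistedS k H δ (a * b) = twistedS k H δ b * twistedS k H δ a := by
  rw [twistedS_eq_sum δ ((ℛ k a).mul (ℛ k b)), twistedS_eq_sum δ (ℛ k a),
    twistedS_eq_sum δ (ℛ k b), Finset.sum_mul_sum, Finset.sum_comm,
    Repr.mul_index, Finset.sum_product]
  refine Finset.sum_congr rfl fun i _ ↦ Finset.sum_congr rfl fun j _ ↦ ?_
  rw [Repr.mul_left, Repr.mul_right, map_mul, antS_eq_antipode, antipode_mul_antidistrib,
    smul_mul_smul_comm, mul_comm (δ _)]

lemma sum_twistedS_mul {ι : Type*} {h : H} (r : Repr k h ι) :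
    ∑ i ∈ r.index, twistedS k H δ (r.left i) * r.right i = δ h • 1 := by
  let T : H ⊗[k] (H ⊗[k] H) →ₗ[k] H :=
    TensorProduct.lid k H ∘ₗ TensorProduct.map δ.toLinearMap (LinearMap.mul' k H ∘ₗ
      (antipode k).rTensor H)
  have hT (a b c : H) : T (a ⊗ₜ (b ⊗ₜ c)) = δ a • (antipode k b * c) := by simp [T]
  calc ∑ i ∈ r.index, twistedS k H δ (r.left i) * r.right i
      = T (Delta2 k H h) := by
        simp only [delta2_eq_sum_left r (fun i ↦ ℛ k (r.left i)), map_sum, hT,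
          twistedS_eq_sum δ (ℛ k _), Finset.sum_mul, smul_mul_assoc, antS_eq_antipode]
    _ = δ (∑ i ∈ r.index, counit (R := k) (r.right i) • r.left i) • 1 := by
        simp only [delta2_eq_sum_right r (fun i ↦ ℛ k (r.right i)), map_sum, hT,
          ← Finset.smul_sum, sum_antipode_mul_eq_smul, smul_smul, map_smul, smul_eq_mul,
          Finset.sum_smul, mul_comm]
    _ = δ h • 1 := by rw [sum_counit_right_smul]

lemma sum_twistedS_antS_mul_twistedS {ι : Type*} {h : H} (r : Repr k h ι) :
    ∑ i ∈ r.index, twistedS k H δ (antS k H (r.right i)) * twistedS k H δ (r.left i)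
      = counit (R := k) h • 1 := by
  simp only [← twistedS_mul, ← map_sum, antS_eq_antipode, sum_mul_antipode_eq_smul, map_smul,
    twistedS_one]

lemma twistedS_twistedS_eq_sum {ι : Type*} {h : H} (r : Repr k h ι) :
    twistedS k H δ (twistedS k H δ h)
      = ∑ i ∈ r.index, δ (r.left i) • twistedS k H δ (antS k H (r.right i)) := by
  simp only [twistedS_eq_sum δ r, map_sum, map_smul]

variable (σ : H)

/-- The anti-Yetter–Drinfeld condition for `{}^σk_δ` says that this map sends `Δ²(h)` to
`δ(h) σ`. -/
noncomputable def aydEval : H ⊗[k] (H ⊗[k] H) →ₗ[k] H :=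
  LinearMap.mul' k H ∘ₗ TensorProduct.comm k H H ∘ₗ TensorProduct.map LinearMap.id
    (LinearMap.mulRight k σ ∘ₗ TensorProduct.lid k H ∘ₗ TensorProduct.map δ.toLinearMap (antS k H))

lemma aydEval_tmul (a b c : H) :
    aydEval δ σ (a ⊗ₜ (b ⊗ₜ c)) = δ b • (antS k H c * σ * a) := by
  simp [aydEval]

lemma aydEval_delta2 {ι : Type*} {h : H} (r : Repr k h ι) :
    aydEval δ σ (Delta2 k H h) = ∑ i ∈ r.index, twistedS k H δ (r.right i) * σ * r.left i := by
  simp only [delta2_eq_sum_right r (fun i ↦ ℛ k (r.right i)), map_sum, aydEval_tmul,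
    twistedS_eq_sum δ (ℛ k _), Finset.sum_mul, smul_mul_assoc]

lemma forall_fin_sum_eq_iff_aydEval (h : H) :
    (∀ (n : ℕ) (A B C : Fin n → H), Delta2 k H h = ∑ i, A i ⊗ₜ[k] (B i ⊗ₜ[k] C i) →
      ∑ i, δ (B i) • (antS k H (C i) * σ * A i) = δ h • σ)
    ↔ aydEval δ σ (Delta2 k H h) = δ h • σ := by
  constructor
  · intro hfin
    obtain ⟨n, A, B, C, hABC⟩ := TensorProduct.exists_sum_tmul_tmul_eq (Delta2 k H h)
    rw [← hfin n A B C hABC, hABC, map_sum]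
    simp only [aydEval_tmul]
  · intro hayd n A B C hABC
    rw [← hayd, hABC, map_sum]
    simp only [aydEval_tmul]

variable {σ}

lemma twistedS_twistedS_eq_conj_iff (hσ : IsGroupLikeElem k σ) (h : H) :
    twistedS k H δ (twistedS k H δ h) = σ * h * antS k H σ
      ↔ σ * h = twistedS k H δ (twistedS k H δ h) * σ := by
  rw [antS_eq_antipode]
  constructor
  · intro hconj
    rw [hconj, mul_assoc, hσ.antipode_mul_cancel, mul_one]
  · intro hcomm
    rw [hcomm, mul_assoc, hσ.mul_antipode_cancel, mul_one]

lemma aydEval_delta2_of_commute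
    (hcomm : ∀ h : H, σ * h = twistedS k H δ (twistedS k H δ h) * σ) (h : H) :
    aydEval δ σ (Delta2 k H h) = δ h • σ := by
  rw [aydEval_delta2 δ σ (ℛ k h)]
  calc ∑ i ∈ (ℛ k h).index, twistedS k H δ ((ℛ k h).right i) * σ * (ℛ k h).left i
      = ∑ i ∈ (ℛ k h).index,
          twistedS k H δ (twistedS k H δ ((ℛ k h).left i) * (ℛ k h).right i) * σ := by
        refine Finset.sum_congr rfl fun i _ ↦ ?_
        rw [mul_assoc, hcomm, twistedS_mul, mul_assoc]
    _ = δ h • σ := by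
        rw [← Finset.sum_mul, ← map_sum, sum_twistedS_mul, map_smul, twistedS_one,
          smul_mul_assoc, one_mul]

lemma commute_of_aydEval_delta2 (hayd : ∀ h : H, aydEval δ σ (Delta2 k H h) = δ h • σ)
    (h : H) : σ * h = twistedS k H δ (twistedS k H δ h) * σ := by
  let T : H ⊗[k] (H ⊗[k] H) →ₗ[k] H :=
    LinearMap.mul' k H ∘ₗ TensorProduct.comm k H H ∘ₗ TensorProduct.map LinearMap.id
      (LinearMap.mulRight k σ ∘ₗ LinearMap.mul' k H ∘ₗ TensorProduct.comm k H H ∘ₗ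
        TensorProduct.map (twistedS k H δ) (twistedS k H δ ∘ₗ antS k H))
  have hT (a b c : H) :
      T (a ⊗ₜ (b ⊗ₜ c)) = twistedS k H δ (antS k H c) * twistedS k H δ b * σ * a := by
    simp [T]
  let r := ℛ k h
  calc σ * h
      = ∑ i ∈ r.index, counit (R := k) (r.right i) • (σ * r.left i) := by
        simp only [← mul_smul_comm, ← Finset.mul_sum, sum_counit_right_smul]
    _ = T (Delta2 k H h) := by
        rw [delta2_eq_sum_right r (fun i ↦ ℛ k (r.right i)), map_sum]
        refine Finset.sum_congr rfl fun i _ ↦ ?_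
        rw [map_sum]
        simp only [hT]
        rw [← Finset.sum_mul, ← Finset.sum_mul, sum_twistedS_antS_mul_twistedS, smul_mul_assoc,
          one_mul, smul_mul_assoc]
    _ = ∑ i ∈ r.index, twistedS k H δ (antS k H (r.right i)) * (δ (r.left i) • σ) := by
        simp only [delta2_eq_sum_left r (fun i ↦ ℛ k (r.left i)), map_sum, hT, mul_assoc,
          ← Finset.mul_sum]
        refine Finset.sum_congr rfl fun i _ ↦ ?_
        rw [← hayd, aydEval_delta2 δ σ (ℛ k (r.left i))]
        simp only [mul_assoc]
    _ = twistedS k H δ (twistedS k H δ h) * σ := by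
        simp only [twistedS_twistedS_eq_sum δ r, Finset.sum_mul, mul_smul_comm, smul_mul_assoc]

end ModularPair

/-- Let `H` be a Hopf algebra with antipode `S`, `δ : H → k` a character
and `σ ∈ H` a group-like element (so `σ⁻¹ = S(σ)`).  Then `(δ, σ)` is a modular pair
in involution, i.e. `δ(σ) = 1` and `S_δ² = Ad_σ` (with `S_δ(h) = δ(h₍₁₎)S(h₍₂₎)` and
`Ad_σ(h) = σhσ⁻¹`), if and only if the one-dimensional space `{}^σk_δ` (right action by
`δ`, left coaction by `σ`) is a stable anti-Yetter–Drinfeld module over `H`, i.e.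
`δ(σ) = 1` and `δ(h₍₂₎) • S(h₍₃₎) σ h₍₁₎ = δ(h) • σ` for all `h ∈ H` (the latter in
Sweedler notation, through arbitrary finite representations of `Δ²(h)`). -/
theorem statement9 (k : Type*) [Field k] (H : Type*) [Ring H] [HopfAlgebra k H]
    (δ : H →ₐ[k] k) (σ : H)
    (hσ1 : Coalgebra.comul (R := k) σ = σ ⊗ₜ[k] σ)
    (hσ2 : Coalgebra.counit (R := k) σ = (1 : k)) :
    (δ σ = 1 ∧ ∀ h : H, twistedS k H δ (twistedS k H δ h) = σ * h * antS k H σ)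
    ↔
    (δ σ = 1 ∧ ∀ (h : H) (n : ℕ) (A B C : Fin n → H),
      Delta2 k H h = ∑ i : Fin n, A i ⊗ₜ[k] (B i ⊗ₜ[k] C i) →
      ∑ i : Fin n, δ (B i) • (antS k H (C i) * σ * A i) = δ h • σ) := by
  have hσ : IsGroupLikeElem k σ := ⟨hσ2, hσ1⟩
  simp only [ModularPair.forall_fin_sum_eq_iff_aydEval,
    ModularPair.twistedS_twistedS_eq_conj_iff δ hσ]
  exact and_congr_right fun _ ↦
    ⟨ModularPair.aydEval_delta2_of_commute δ, ModularPair.commute_of_aydEval_delta2 δ⟩
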